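/- arXiv:2105.00857 — 2 statements merged into one kernel-verified Lean document; each statement's English description precedes it below -/
import Mathlib

section
/- Let G be a multigraph with minimum edge-degree at least 8c, and let F ⊆ V(G) be such that the induced subgraph G[F] is θ_c-minor-free. Then the number of edges with at least one endpoint in X := V(G) \ F is at least |E(G)|/2. -/
open Finset

attribute [local instance] Classical.propDecidable

/-- A finite loopless multigraph on vertex set `V`. -/
structure Multigraph (V : Type) where
  E : Type
  [fintE : Fintype E]
  ends : E → Sym2 V
  loopless : ∀ e, ¬ (ends e).IsDiag

attribute [instance] Multigraph.fintE

namespace Multigraph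

variable {V : Type} [Fintype V] [DecidableEq V] (G : Multigraph V)

/-- The set of edges with one endpoint in `X` and the other in `Y`. -/
noncomputable def crossing (X Y : Finset V) : Finset G.E :=
  Finset.univ.filter (fun e => ∃ x ∈ X, ∃ y ∈ Y, G.ends e = s(x, y))

/-- The set of edges with both endpoints in `S`. -/
noncomputable def inside (S : Finset V) : Finset G.E :=
  Finset.univ.filter (fun e => ∀ v ∈ G.ends e, v ∈ S)

/-- Adjacency between two vertices. -/
def AdjV (x y : V) : Prop := ∃ e : G.E, G.ends e = s(x, y)

/-- Adjacency within a vertex subset. -/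
def AdjOn (S : Finset V) (x y : V) : Prop := x ∈ S ∧ y ∈ S ∧ G.AdjV x y

/-- A vertex set is connected if it is nonempty and any two of its vertices are
joined by a path inside the set. -/
def ConnectedSet (S : Finset V) : Prop :=
  S.Nonempty ∧ ∀ x ∈ S, ∀ y ∈ S, Relation.ReflTransGen (G.AdjOn S) x y

/-- A θ_c-model: two disjoint connected vertex sets crossed by at least `c` edges. -/
def ThetaModel (c : ℕ) (X Y : Finset V) : Prop :=
  Disjoint X Y ∧ G.ConnectedSet X ∧ G.ConnectedSet Y ∧ c ≤ (G.crossing X Y).card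

/-- `G` contains θ_c as a minor. -/
def HasThetaMinor (c : ℕ) : Prop := ∃ X Y, G.ThetaModel c X Y

/-- A cut: the set of edges crossing some vertex bipartition. -/
def IsCut (F : Finset G.E) : Prop := ∃ A : Finset V, F = G.crossing A Aᶜ

/-- A bond: a minimal nonempty cut. -/
def IsBond (F : Finset G.E) : Prop :=
  G.IsCut F ∧ F.Nonempty ∧ ∀ F' ⊂ F, F'.Nonempty → ¬ G.IsCut F'

/-- Edge-degree of a vertex: number of incident edges (with multiplicity). -/
noncomputable def edeg (v : V) : ℕ :=
  (Finset.univ.filter (fun e : G.E => v ∈ G.ends e)).card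

/-- The multiplicity of the (multi-)edge between `x` and `y`. -/
noncomputable def mult (x y : V) : ℕ :=
  (Finset.univ.filter (fun e : G.E => G.ends e = s(x, y))).card

/-- The set of neighbours of a vertex. -/
noncomputable def nbrs (v : V) : Finset V := Finset.univ.filter (fun u => G.AdjV v u)

/-- The induced subgraph on a vertex subset (kept on the same vertex type;
only edges with both endpoints in `S` survive). -/
noncomputable def induce (S : Finset V) : Multigraph V where
  E := {e : G.E // ∀ v ∈ G.ends e, v ∈ S}
  ends e := G.ends e.1
  loopless e := G.loopless e.1

/-- `S` is a c-bond cover: `G - S` is θ_c-minor-free. -/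
def CBondCover (c : ℕ) (S : Finset V) : Prop :=
  ¬ (G.induce Sᶜ).HasThetaMinor c

/-- The graph `K^{(u,v)}`: the induced subgraph on `K ∪ {u,v}` with all
`u`-`v` edges removed. -/
noncomputable def outK (K : Finset V) (u v : V) : Multigraph V where
  E := {e : G.E // (∀ x ∈ G.ends e, x ∈ insert u (insert v K)) ∧ G.ends e ≠ s(u, v)}
  ends e := G.ends e.1
  loopless e := G.loopless e.1

/-- Add `i` parallel edges between the distinct vertices `u` and `v`. -/
noncomputable def addPar (u v : V) (huv : u ≠ v) (i : ℕ) : Multigraph V where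
  E := G.E ⊕ Fin i
  ends := Sum.elim G.ends (fun _ => s(u, v))
  loopless := by
    rintro (e | e)
    · exact G.loopless e
    · simpa using huv

/-- A cluster collection: a nonempty collection of pairwise disjoint,
nonempty, connected vertex subsets. -/
def ClusterCollection (𝒞 : Finset (Finset V)) : Prop :=
  𝒞.Nonempty ∧ (∀ C ∈ 𝒞, C.Nonempty ∧ G.ConnectedSet C) ∧
    (∀ C ∈ 𝒞, ∀ D ∈ 𝒞, C ≠ D → Disjoint C D)

/-- The edges of `G` that are not internal to any cluster of `𝒞`;
these are exactly the edges surviving in `G/𝒞` when `𝒞` is a cluster partition. -/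
noncomputable def interE (𝒞 : Finset (Finset V)) : Finset G.E :=
  Finset.univ.filter (fun e => ¬ ∃ C ∈ 𝒞, ∀ v ∈ G.ends e, v ∈ C)

/-- A c-outgrowth `(K, u, v)` of `G`. -/
def IsOutgrowth (c : ℕ) (K : Finset V) (u v : V) : Prop :=
  u ≠ v ∧ u ∉ K ∧ v ∉ K ∧ K.Nonempty ∧
  (G.induce (Finset.univ \ {u, v})).ConnectedSet K ∧
  (∀ x ∈ K, ∀ y, G.AdjV x y → y ∈ K ∨ y = u ∨ y = v) ∧
  (∃ x ∈ K, G.AdjV x u) ∧ (∃ x ∈ K, G.AdjV x v) ∧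
  ¬ (G.outK K u v).HasThetaMinor c

end Multigraph

namespace Multigraph

variable {V : Type} [Fintype V] [DecidableEq V] (G : Multigraph V)

lemma adjV_symm' {x y : V} (h : G.AdjV x y) : G.AdjV y x := by
  obtain ⟨e, he⟩ := h
  exact ⟨e, by rw [he, Sym2.eq_swap]⟩

lemma connectedSet_union' {C D : Finset V} (hC : G.ConnectedSet C) (hD : G.ConnectedSet D)
    {x y : V} (hx : x ∈ C) (hy : y ∈ D) (hxy : G.AdjV x y) :
    G.ConnectedSet (C ∪ D) := by
  have monoC : ∀ a b, Relation.ReflTransGen (G.AdjOn C) a b →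
      Relation.ReflTransGen (G.AdjOn (C ∪ D)) a b := fun a b h =>
    Relation.ReflTransGen.mono (p := G.AdjOn (C ∪ D))
      (fun u v (huv : G.AdjOn C u v) => ⟨Finset.mem_union_left _ huv.1,
        Finset.mem_union_left _ huv.2.1, huv.2.2⟩) a b h
  have monoD : ∀ a b, Relation.ReflTransGen (G.AdjOn D) a b →
      Relation.ReflTransGen (G.AdjOn (C ∪ D)) a b := fun a b h =>
    Relation.ReflTransGen.mono (p := G.AdjOn (C ∪ D))
      (fun u v (huv : G.AdjOn D u v) => ⟨Finset.mem_union_right _ huv.1,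
        Finset.mem_union_right _ huv.2.1, huv.2.2⟩) a b h
  have step : Relation.ReflTransGen (G.AdjOn (C ∪ D)) x y :=
    Relation.ReflTransGen.single
      ⟨Finset.mem_union_left _ hx, Finset.mem_union_right _ hy, hxy⟩
  have step' : Relation.ReflTransGen (G.AdjOn (C ∪ D)) y x :=
    Relation.ReflTransGen.single
      ⟨Finset.mem_union_right _ hy, Finset.mem_union_left _ hx, G.adjV_symm' hxy⟩
  refine ⟨⟨x, Finset.mem_union_left _ hx⟩, ?_⟩
  intro a ha b hb
  rcases Finset.mem_union.1 ha with ha' | ha' <;> rcases Finset.mem_union.1 hb with hb' | hb'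
  · exact monoC _ _ (hC.2 a ha' b hb')
  · exact ((monoC _ _ (hC.2 a ha' x hx)).trans step).trans (monoD _ _ (hD.2 y hy b hb'))
  · exact ((monoD _ _ (hD.2 a ha' y hy)).trans step').trans (monoC _ _ (hC.2 x hx b hb'))
  · exact monoD _ _ (hD.2 a ha' b hb')

/-- The edges joining two distinct clusters of `𝒞`. -/
noncomputable def btw (𝒞 : Finset (Finset V)) : Finset G.E :=
  Finset.univ.filter
    (fun e => ∃ C ∈ 𝒞, ∃ D ∈ 𝒞, C ≠ D ∧ ∃ x ∈ C, ∃ y ∈ D, G.ends e = s(x, y))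

lemma btw_card_le (c : ℕ) (hG : ¬ G.HasThetaMinor c) :
    ∀ n (𝒞 : Finset (Finset V)), 𝒞.card = n →
      (∀ C ∈ 𝒞, G.ConnectedSet C) →
      (∀ C ∈ 𝒞, ∀ D ∈ 𝒞, C ≠ D → Disjoint C D) →
      (G.btw 𝒞).card ≤ 2 * c * n := by
  intro n
  induction n using Nat.strong_induction_on with
  | _ n ih =>
    intro 𝒞 hcard hconn hdisj
    by_contra hlt
    push_neg at hlt
    have hne : (G.btw 𝒞).Nonempty := Finset.card_pos.1 (lt_of_le_of_lt (Nat.zero_le _) hlt)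
    obtain ⟨e, he⟩ := hne
    rw [btw, Finset.mem_filter] at he
    obtain ⟨-, C, hCmem, D, hDmem, hCD, x, hx, y, hy, hends⟩ := he
    by_cases hcross : c ≤ (G.crossing C D).card
    · exact hG ⟨C, D, hdisj C hCmem D hDmem hCD, hconn C hCmem, hconn D hDmem, hcross⟩
    push_neg at hcross
    have hadj : G.AdjV x y := ⟨e, hends⟩
    set 𝒞₀ := (𝒞.erase C).erase D with h𝒞₀
    set 𝒞' := insert (C ∪ D) 𝒞₀ with h𝒞'
    have hDeC : D ∈ 𝒞.erase C := Finset.mem_erase.2 ⟨fun h => hCD h.symm, hDmem⟩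
    have hsub₀ : 𝒞₀ ⊆ 𝒞 := (Finset.erase_subset _ _).trans (Finset.erase_subset _ _)
    have hdisj₀ : ∀ E ∈ 𝒞₀, Disjoint (C ∪ D) E := by
      intro E hE
      have hE𝒞 : E ∈ 𝒞 := hsub₀ hE
      have h1 : E ≠ D := (Finset.mem_erase.1 hE).1
      have h2 : E ≠ C := (Finset.mem_erase.1 (Finset.mem_erase.1 hE).2).1
      exact Finset.disjoint_union_left.2
        ⟨hdisj C hCmem E hE𝒞 (Ne.symm h2), hdisj D hDmem E hE𝒞 (Ne.symm h1)⟩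
    have hnotmem : C ∪ D ∉ 𝒞₀ := by
      intro h
      have := hdisj₀ _ h
      have hx' : x ∈ C ∪ D := Finset.mem_union_left _ hx
      exact Finset.disjoint_left.1 this hx' hx'
    have hn2 : 2 ≤ n := by
      have : 1 < 𝒞.card := Finset.one_lt_card.2 ⟨C, hCmem, D, hDmem, hCD⟩
      omega
    have hc₀ : 𝒞₀.card = n - 2 := by
      rw [h𝒞₀, Finset.card_erase_of_mem hDeC, Finset.card_erase_of_mem hCmem, hcard]
      omega
    have hc' : 𝒞'.card = n - 1 := by
      rw [h𝒞', Finset.card_insert_of_notMem hnotmem, hc₀]; omega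
    have hconn' : ∀ A ∈ 𝒞', G.ConnectedSet A := by
      intro A hA
      rcases Finset.mem_insert.1 hA with rfl | hA₀
      · exact G.connectedSet_union' (hconn C hCmem) (hconn D hDmem) hx hy hadj
      · exact hconn A (hsub₀ hA₀)
    have hdisj' : ∀ A ∈ 𝒞', ∀ B ∈ 𝒞', A ≠ B → Disjoint A B := by
      intro A hA B hB hAB
      rcases Finset.mem_insert.1 hA with rfl | hA₀ <;> rcases Finset.mem_insert.1 hB with rfl | hB₀
      · exact absurd rfl hAB
      · exact hdisj₀ B hB₀
      · exact (hdisj₀ A hA₀).symm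
      · exact hdisj A (hsub₀ hA₀) B (hsub₀ hB₀) hAB
    have hsubE : G.btw 𝒞 ⊆ G.btw 𝒞' ∪ G.crossing C D := by
      intro e' he'
      rw [btw, Finset.mem_filter] at he'
      obtain ⟨-, A, hA, B, hB, hAB, a, haA, b, hbB, hab⟩ := he'
      by_cases hAcd : A = C ∨ A = D
      · by_cases hBcd : B = C ∨ B = D
        · refine Finset.mem_union_right _ ?_
          rw [crossing, Finset.mem_filter]
          rcases hAcd with rfl | rfl <;> rcases hBcd with rfl | rfl
          · exact absurd rfl hAB
          · exact ⟨Finset.mem_univ _, a, haA, b, hbB, hab⟩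
          · exact ⟨Finset.mem_univ _, b, hbB, a, haA, by rw [hab, Sym2.eq_swap]⟩
          · exact absurd rfl hAB
        · push_neg at hBcd
          refine Finset.mem_union_left _ ?_
          rw [btw, Finset.mem_filter]
          have hB₀ : B ∈ 𝒞₀ :=
            Finset.mem_erase.2 ⟨hBcd.2, Finset.mem_erase.2 ⟨hBcd.1, hB⟩⟩
          have haCD : a ∈ C ∪ D := by
            rcases hAcd with rfl | rfl
            · exact Finset.mem_union_left _ haA
            · exact Finset.mem_union_right _ haA
          have hne : (C ∪ D) ≠ B := by
            intro h
            have := hdisj₀ B hB₀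
            rw [h] at this
            exact Finset.disjoint_left.1 this hbB hbB
          exact ⟨Finset.mem_univ _, C ∪ D, Finset.mem_insert_self _ _, B,
            Finset.mem_insert_of_mem hB₀, hne, a, haCD, b, hbB, hab⟩
      · push_neg at hAcd
        by_cases hBcd : B = C ∨ B = D
        · refine Finset.mem_union_left _ ?_
          rw [btw, Finset.mem_filter]
          have hA₀ : A ∈ 𝒞₀ :=
            Finset.mem_erase.2 ⟨hAcd.2, Finset.mem_erase.2 ⟨hAcd.1, hA⟩⟩
          have hbCD : b ∈ C ∪ D := by
            rcases hBcd with rfl | rfl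
            · exact Finset.mem_union_left _ hbB
            · exact Finset.mem_union_right _ hbB
          have hne : A ≠ (C ∪ D) := by
            intro h
            have := hdisj₀ A hA₀
            rw [← h] at this
            exact Finset.disjoint_left.1 this haA haA
          exact ⟨Finset.mem_univ _, A, Finset.mem_insert_of_mem hA₀, C ∪ D,
            Finset.mem_insert_self _ _, hne, a, haA, b, hbCD, hab⟩
        · push_neg at hBcd
          refine Finset.mem_union_left _ ?_
          rw [btw, Finset.mem_filter]
          have hA₀ : A ∈ 𝒞₀ :=
            Finset.mem_erase.2 ⟨hAcd.2, Finset.mem_erase.2 ⟨hAcd.1, hA⟩⟩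
          have hB₀ : B ∈ 𝒞₀ :=
            Finset.mem_erase.2 ⟨hBcd.2, Finset.mem_erase.2 ⟨hBcd.1, hB⟩⟩
          exact ⟨Finset.mem_univ _, A, Finset.mem_insert_of_mem hA₀, B,
            Finset.mem_insert_of_mem hB₀, hAB, a, haA, b, hbB, hab⟩
    have h1 : (G.btw 𝒞).card ≤ (G.btw 𝒞').card + (G.crossing C D).card :=
      (Finset.card_le_card hsubE).trans (Finset.card_union_le _ _)
    have h2 : (G.btw 𝒞').card ≤ 2 * c * (n - 1) :=
      ih (n - 1) (by omega) 𝒞' hc' hconn' hdisj'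
    have hfin : (G.btw 𝒞).card < 2 * c * n := by
      have e1 : 2 * c * (n - 1) + 2 * c = 2 * c * n := by
        rw [← Nat.mul_succ]; congr 1; omega
      calc (G.btw 𝒞).card ≤ (G.btw 𝒞').card + (G.crossing C D).card := h1
        _ ≤ 2 * c * (n - 1) + (G.crossing C D).card := Nat.add_le_add_right h2 _
        _ < 2 * c * (n - 1) + 2 * c := Nat.add_lt_add_left (by omega) _
        _ = 2 * c * n := e1
    exact lt_irrefl _ (hlt.trans hfin)

lemma card_induce_le (c : ℕ) (F : Finset V) (hF : ¬ (G.induce F).HasThetaMinor c) :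
    Fintype.card (G.induce F).E ≤ 2 * c * F.card := by
  set H := G.induce F with hH
  set 𝒞 : Finset (Finset V) := F.image (fun v => {v}) with h𝒞
  have hcard : 𝒞.card = F.card :=
    Finset.card_image_of_injective _ (fun a b h => Finset.singleton_injective h)
  have hconn : ∀ C ∈ 𝒞, H.ConnectedSet C := by
    intro C hC
    obtain ⟨v, hv, rfl⟩ := Finset.mem_image.1 hC
    refine ⟨⟨v, Finset.mem_singleton_self v⟩, ?_⟩
    intro a ha b hb
    rw [Finset.mem_singleton] at ha hb
    subst ha; subst hb
    exact Relation.ReflTransGen.refl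
  have hdisj : ∀ C ∈ 𝒞, ∀ D ∈ 𝒞, C ≠ D → Disjoint C D := by
    intro C hC D hD hCD
    obtain ⟨v, hv, rfl⟩ := Finset.mem_image.1 hC
    obtain ⟨w, hw, rfl⟩ := Finset.mem_image.1 hD
    exact Finset.disjoint_singleton.2 (fun h => hCD (by rw [h]))
  have hall : H.btw 𝒞 = Finset.univ := by
    refine Finset.eq_univ_iff_forall.2 ?_
    intro e
    obtain ⟨a, b, hab⟩ : ∃ a b, H.ends e = s(a, b) := ⟨(H.ends e).out.1, (H.ends e).out.2, by exact (Quot.out_eq _).symm⟩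
    have hne : a ≠ b := by
      have := H.loopless e
      rw [hab] at this
      simpa using this
    have haF : a ∈ F := e.2 a (show a ∈ H.ends e by rw [hab]; exact Sym2.mem_mk_left a b)
    have hbF : b ∈ F := e.2 b (show b ∈ H.ends e by rw [hab]; exact Sym2.mem_mk_right a b)
    rw [btw, Finset.mem_filter]
    exact ⟨Finset.mem_univ _, {a}, Finset.mem_image_of_mem _ haF, {b},
      Finset.mem_image_of_mem _ hbF,
      fun h => hne (Finset.singleton_injective h),
      a, Finset.mem_singleton_self a, b, Finset.mem_singleton_self b, hab⟩
  have := H.btw_card_le c hF 𝒞.card 𝒞 rfl hconn hdisj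
  rw [hall, hcard] at this
  simpa using this

end Multigraph
/-- if δ(G) ≥ 8c and G[F] is θ_c-minor-free, then the edges meeting
X = V \ F number at least |E(G)|/2. -/
theorem edges_meeting_cover_ge_half {V : Type} [Fintype V] [DecidableEq V]
    (G : Multigraph V) (c : ℕ) (hdeg : ∀ v : V, 8 * c ≤ G.edeg v)
    (F : Finset V) (hF : ¬ (G.induce F).HasThetaMinor c) :
    Fintype.card G.E ≤
      2 * (Finset.univ.filter (fun e : G.E => ∃ v ∈ G.ends e, v ∈ Fᶜ)).card := by
  classical
  set M := Finset.univ.filter (fun e : G.E => ∃ v ∈ G.ends e, v ∈ Fᶜ) with hM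
  set A := Finset.univ.filter (fun e : G.E => ∀ v ∈ G.ends e, v ∈ F) with hA
  have hMalt : M = Finset.univ.filter (fun e : G.E => ¬ ∀ v ∈ G.ends e, v ∈ F) := by
    apply Finset.filter_congr
    intro e _
    simp [Finset.mem_compl]
  have hAM : A.card + M.card = Fintype.card G.E := by
    rw [hMalt, hA]
    have h := Finset.card_filter_add_card_filter_not
      (s := (Finset.univ : Finset G.E)) (p := fun e => ∀ v ∈ G.ends e, v ∈ F)
    simpa using h
  -- |A| = number of edges of the induced subgraph on F
  have hAcard : A.card = Fintype.card (G.induce F).E := by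
    rw [hA]
    exact (Fintype.card_of_subtype
      (Finset.univ.filter (fun e : G.E => ∀ v ∈ G.ends e, v ∈ F))
      (by intro x; simp)).symm
  have hAbound : A.card ≤ 2 * c * F.card := by
    rw [hAcard]; exact G.card_induce_le c F hF
  -- double counting
  have hdouble : ∑ v ∈ F, G.edeg v
      = ∑ e : G.E, (F.filter (fun v => v ∈ G.ends e)).card := by
    simp only [Multigraph.edeg, Finset.card_filter]
    rw [Finset.sum_comm]
  have hperedge2 : ∀ e : G.E, (F.filter (fun v => v ∈ G.ends e)).card ≤ 2 := by
    intro e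
    obtain ⟨a, b, hab⟩ : ∃ a b, G.ends e = s(a, b) :=
      ⟨(G.ends e).out.1, (G.ends e).out.2, by exact (Quot.out_eq _).symm⟩
    have hsub : F.filter (fun v => v ∈ G.ends e) ⊆ {a, b} := by
      intro v hv
      rw [Finset.mem_filter, hab] at hv
      rcases Sym2.mem_iff.1 hv.2 with rfl | rfl
      · exact Finset.mem_insert_self _ _
      · exact Finset.mem_insert_of_mem (Finset.mem_singleton_self _)
    calc (F.filter (fun v => v ∈ G.ends e)).card ≤ ({a, b} : Finset V).card :=
          Finset.card_le_card hsub
      _ ≤ 2 := Finset.card_insert_le _ _ |>.trans (by simp)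
  have hperedge1 : ∀ e ∈ M, (F.filter (fun v => v ∈ G.ends e)).card ≤ 1 := by
    intro e he
    rw [hM, Finset.mem_filter] at he
    obtain ⟨-, w, hw, hwF⟩ := he
    rw [Finset.mem_compl] at hwF
    obtain ⟨a, b, hab⟩ : ∃ a b, G.ends e = s(a, b) :=
      ⟨(G.ends e).out.1, (G.ends e).out.2, by exact (Quot.out_eq _).symm⟩
    rw [hab] at hw
    rcases Sym2.mem_iff.1 hw with rfl | rfl
    · have hsub : F.filter (fun v => v ∈ G.ends e) ⊆ {b} := by
        intro v hv
        rw [Finset.mem_filter, hab] at hv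
        rcases Sym2.mem_iff.1 hv.2 with rfl | rfl
        · exact absurd hv.1 hwF
        · exact Finset.mem_singleton_self _
      calc _ ≤ ({b} : Finset V).card := Finset.card_le_card hsub
        _ = 1 := Finset.card_singleton _
    · have hsub : F.filter (fun v => v ∈ G.ends e) ⊆ {a} := by
        intro v hv
        rw [Finset.mem_filter, hab] at hv
        rcases Sym2.mem_iff.1 hv.2 with rfl | rfl
        · exact Finset.mem_singleton_self _
        · exact absurd hv.1 hwF
      calc _ ≤ ({a} : Finset V).card := Finset.card_le_card hsub
        _ = 1 := Finset.card_singleton _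
  have hsplit : ∑ e : G.E, (F.filter (fun v => v ∈ G.ends e)).card
      = ∑ e ∈ A, (F.filter (fun v => v ∈ G.ends e)).card
        + ∑ e ∈ M, (F.filter (fun v => v ∈ G.ends e)).card := by
    rw [hMalt, hA]
    exact (Finset.sum_filter_add_sum_filter_not Finset.univ _ _).symm
  have hsumA : ∑ e ∈ A, (F.filter (fun v => v ∈ G.ends e)).card ≤ 2 * A.card := by
    calc ∑ e ∈ A, (F.filter (fun v => v ∈ G.ends e)).card
        ≤ ∑ _e ∈ A, 2 := Finset.sum_le_sum (fun e _ => hperedge2 e)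
      _ = 2 * A.card := by rw [Finset.sum_const]; ring
  have hsumM : ∑ e ∈ M, (F.filter (fun v => v ∈ G.ends e)).card ≤ M.card := by
    calc ∑ e ∈ M, (F.filter (fun v => v ∈ G.ends e)).card
        ≤ ∑ _e ∈ M, 1 := Finset.sum_le_sum hperedge1
      _ = M.card := by rw [Finset.sum_const]; ring
  have hdeglow : F.card * (8 * c) ≤ ∑ v ∈ F, G.edeg v := by
    calc F.card * (8 * c) = ∑ _v ∈ F, 8 * c := by rw [Finset.sum_const]; ring
      _ ≤ ∑ v ∈ F, G.edeg v := Finset.sum_le_sum (fun v _ => hdeg v)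
  have key : 8 * (c * F.card) ≤ 2 * A.card + M.card := by
    have h8 : F.card * (8 * c) = 8 * (c * F.card) := by ring
    calc 8 * (c * F.card) = F.card * (8 * c) := by ring
      _ ≤ ∑ v ∈ F, G.edeg v := hdeglow
      _ = ∑ e : G.E, (F.filter (fun v => v ∈ G.ends e)).card := hdouble
      _ = _ + _ := hsplit
      _ ≤ 2 * A.card + M.card := Nat.add_le_add hsumA hsumM
  have hA2 : A.card ≤ 2 * (c * F.card) := by
    have : 2 * c * F.card = 2 * (c * F.card) := by ring
    omega
  omega
end

section
/- Let (K, u, v) be a c-outgrowth of G and let S be a minimal c-bond cover of G. If S contains u or v, then S ∩ V(K) = ∅. -/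
open Finset

attribute [local instance] Classical.propDecidable

section Helpers

open Relation

variable {V : Type} [Fintype V] [DecidableEq V]

lemma Multigraph.adjV_symm (H : Multigraph V) {x y : V} (h : H.AdjV x y) : H.AdjV y x := by
  obtain ⟨e, he⟩ := h
  exact ⟨e, he.trans (Sym2.eq_swap)⟩

lemma crossing_comm (H : Multigraph V) (X Y : Finset V) :
    H.crossing X Y = H.crossing Y X := by
  unfold Multigraph.crossing
  ext e
  simp only [Finset.mem_filter, Finset.mem_univ, true_and]
  constructor <;> rintro ⟨x, hx, y, hy, h⟩ <;> exact ⟨y, hy, x, hx, h.trans Sym2.eq_swap⟩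

lemma theta_swap (H : Multigraph V) {c : ℕ} {X Y : Finset V}
    (h : H.ThetaModel c X Y) : H.ThetaModel c Y X :=
  ⟨h.1.symm, h.2.2.1, h.2.1, by rw [crossing_comm]; exact h.2.2.2⟩

lemma connected_transfer (H₁ : Multigraph V) {H₂ : Multigraph V} {Z : Finset V}
    (h : ∀ x ∈ Z, ∀ y ∈ Z, H₁.AdjV x y → H₂.AdjV x y)
    (hne : Z.Nonempty)
    (hw : ∀ x ∈ Z, ∀ y ∈ Z, Relation.ReflTransGen (H₁.AdjOn Z) x y) :
    H₂.ConnectedSet Z :=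
  ⟨hne, fun x hx y hy =>
    Relation.ReflTransGen.mono (r := H₁.AdjOn Z) (p := H₂.AdjOn Z)
      (fun a b (hab : H₁.AdjOn Z a b) => ⟨hab.1, hab.2.1, h a hab.1 b hab.2.1 hab.2.2⟩) x y (hw x hx y hy)⟩

lemma crossing_card_le {β : Type}
    (H₁ H₂ : Multigraph V) (p₁ : H₁.E → β) (p₂ : H₂.E → β)
    (h₁ : Function.Injective p₁) (h₂ : Function.Injective p₂)
    (X Y X' Y' : Finset V)
    (h : ∀ e₁ : H₁.E, ∀ x ∈ X, ∀ y ∈ Y, H₁.ends e₁ = s(x, y) →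
      ∃ e₂ : H₂.E, p₂ e₂ = p₁ e₁ ∧ H₂.ends e₂ = s(x, y) ∧ x ∈ X' ∧ y ∈ Y') :
    (H₁.crossing X Y).card ≤ (H₂.crossing X' Y').card := by
  rw [← Finset.card_image_of_injective (H₁.crossing X Y) h₁,
      ← Finset.card_image_of_injective (H₂.crossing X' Y') h₂]
  apply Finset.card_le_card
  intro b hb
  simp only [Finset.mem_image] at hb ⊢
  obtain ⟨e₁, he₁, rfl⟩ := hb
  have hmem := (Finset.mem_filter.mp he₁).2
  obtain ⟨x, hx, y, hy, hends⟩ := hmem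
  obtain ⟨e₂, hp, hends₂, hx', hy'⟩ := h e₁ x hx y hy hends
  exact ⟨e₂, Finset.mem_filter.mpr ⟨Finset.mem_univ _, x, hx', y, hy', hends₂⟩, hp⟩

lemma restrict_walk (H : Multigraph V) (A X : Finset V) (z : V)
    (gate : ∀ x y : V, x ∈ A → y ∉ A → H.AdjV x y → x = z)
    {x y : V} (hy : y ∈ A)
    (hw : Relation.ReflTransGen (H.AdjOn X) x y) :
    (x ∈ A → Relation.ReflTransGen (H.AdjOn (X ∩ A)) x y) ∧
    (x ∉ A → Relation.ReflTransGen (H.AdjOn (X ∩ A)) z y) := by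
  induction hw using Relation.ReflTransGen.head_induction_on with
  | refl => exact ⟨fun _ => Relation.ReflTransGen.refl, fun h => absurd hy h⟩
  | @head a c h' hw ih =>
    obtain ⟨haX, hcX, hadj⟩ := h'
    constructor
    · intro haA
      by_cases hcA : c ∈ A
      · exact Relation.ReflTransGen.head
          ⟨Finset.mem_inter.mpr ⟨haX, haA⟩, Finset.mem_inter.mpr ⟨hcX, hcA⟩, hadj⟩
          (ih.1 hcA)
      · rw [gate a c haA hcA hadj]
        exact ih.2 hcA
    · intro haA
      by_cases hcA : c ∈ A
      · have hca : c = z := gate c a hcA haA (H.adjV_symm hadj)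
        exact hca ▸ ih.1 hcA
      · exact ih.2 hcA

lemma gate_mem (H : Multigraph V) (A X : Finset V) (z : V)
    (gate : ∀ x y : V, x ∈ A → y ∉ A → H.AdjV x y → x = z)
    {x y : V} (hy : y ∉ A)
    (hw : Relation.ReflTransGen (H.AdjOn X) x y) :
    x ∈ A → z ∈ X := by
  induction hw using Relation.ReflTransGen.head_induction_on with
  | refl => exact fun h => absurd h hy
  | @head a c h' hw ih =>
    intro haA
    obtain ⟨haX, hcX, hadj⟩ := h'
    by_cases hcA : c ∈ A
    · exact ih hcA
    · exact (gate a c haA hcA hadj) ▸ haX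

lemma main_aux {V : Type} [Fintype V] [DecidableEq V] (G : Multigraph V) (c : ℕ)
    (K : Finset V) (u v w z : V) (S : Finset V)
    (hc : 1 ≤ c)
    (hsym : s(u, v) = s(w, z))
    (hwK : w ∉ K) (hzK : z ∉ K)
    (hzin : z ∈ insert u (insert v K))
    (hnb : ∀ x ∈ K, ∀ y, G.AdjV x y → y ∈ K ∨ y = w ∨ y = z)
    (hwS : w ∈ S \ K)
    (hS : ¬ (G.induce Sᶜ).HasThetaMinor c)
    (hout : ¬ (G.outK K u v).HasThetaMinor c)
    (X Y : Finset V)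
    (hm : (G.induce (S \ K)ᶜ).ThetaModel c X Y) : False := by
  -- endpoints of edges of G − (S \ K) avoid S \ K
  have hHmem : ∀ {x y : V}, (G.induce (S \ K)ᶜ).AdjV x y → x ∉ S \ K ∧ y ∉ S \ K := by
    rintro x y ⟨e, he⟩
    have hx : x ∈ (S \ K)ᶜ := e.2 x (by
      rw [show G.ends e.1 = s(x, y) from he]; exact Sym2.mem_mk_left x y)
    have hy' : y ∈ (S \ K)ᶜ := e.2 y (by
      rw [show G.ends e.1 = s(x, y) from he]; exact Sym2.mem_mk_right x y)
    exact ⟨Finset.mem_compl.mp hx, Finset.mem_compl.mp hy'⟩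
  -- gateway property for A = insert z K
  have hgateA : ∀ x y : V, x ∈ (insert z K : Finset V) → y ∉ (insert z K : Finset V) →
      (G.induce (S \ K)ᶜ).AdjV x y → x = z := by
    intro x y hx hy hadj
    rcases Finset.mem_insert.mp hx with h | hxK
    · exact h
    · obtain ⟨e, he⟩ := hadj
      rcases hnb x hxK y ⟨e.1, he⟩ with hyK | hyw | hyz
      · exact absurd (Finset.mem_insert_of_mem hyK) hy
      · exact absurd hwS (hyw ▸ (hHmem ⟨e, he⟩).2)
      · exact absurd (by rw [hyz]; exact Finset.mem_insert_self z K) hy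
  -- gateway property for Kᶜ
  have hgateC : ∀ x y : V, x ∈ (Kᶜ : Finset V) → y ∉ (Kᶜ : Finset V) →
      (G.induce (S \ K)ᶜ).AdjV x y → x = z := by
    intro x y hx hy hadj
    obtain ⟨e, he⟩ := hadj
    have hyK : y ∈ K := by simpa using hy
    have hGyx : G.AdjV y x := ⟨e.1, he.trans Sym2.eq_swap⟩
    rcases hnb y hyK x hGyx with hxK | hxw | hxz
    · exact absurd hxK (Finset.mem_compl.mp hx)
    · exact absurd hwS (hxw ▸ (hHmem ⟨e, he⟩).1)
    · exact hxz
  -- case where one branch set avoids K ∪ {z}: embed into G − S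
  have hScase : ∀ P Q : Finset V, (G.induce (S \ K)ᶜ).ThetaModel c P Q →
      Q ∩ (insert z K : Finset V) = ∅ → False := by
    intro P Q hmod hQA
    obtain ⟨hdisj, ⟨hPne, hPconn⟩, ⟨hQne, hQconn⟩, hcard⟩ := hmod
    have hQnot : ∀ q ∈ Q, q ∉ K ∧ q ≠ z := by
      intro q hq
      constructor
      · intro hk
        have : q ∈ Q ∩ insert z K :=
          Finset.mem_inter.mpr ⟨hq, Finset.mem_insert_of_mem hk⟩
        rw [hQA] at this
        exact absurd this (Finset.notMem_empty q)
      · intro hk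
        have : q ∈ Q ∩ insert z K :=
          Finset.mem_inter.mpr ⟨hq, by rw [hk]; exact Finset.mem_insert_self z K⟩
        rw [hQA] at this
        exact absurd this (Finset.notMem_empty q)
    have hcr : ∀ (e : (G.induce (S \ K)ᶜ).E) (x : V), x ∈ P → ∀ y ∈ Q,
        (G.induce (S \ K)ᶜ).ends e = s(x, y) → x ∉ K ∧ x ∉ S ∧ y ∉ S := by
      intro e x hx y hy he
      have hxK : x ∉ K := by
        intro hxK
        rcases hnb x hxK y ⟨e.1, he⟩ with h | h | h
        · exact (hQnot y hy).1 h
        · exact absurd hwS (h ▸ (hHmem ⟨e, he⟩).2)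
        · exact (hQnot y hy).2 h
      refine ⟨hxK, ?_, ?_⟩
      · exact fun hxS => (hHmem ⟨e, he⟩).1 (Finset.mem_sdiff.mpr ⟨hxS, hxK⟩)
      · exact fun hyS => (hHmem ⟨e, he⟩).2 (Finset.mem_sdiff.mpr ⟨hyS, (hQnot y hy).1⟩)
    have hcne : ((G.induce (S \ K)ᶜ).crossing P Q).Nonempty :=
      Finset.card_pos.mp (lt_of_lt_of_le hc hcard)
    obtain ⟨e0, he0⟩ := hcne
    have he0' := (Finset.mem_filter.mp he0).2
    obtain ⟨x0, hx0, y0, hy0, hends0⟩ := he0'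
    have hx0K : x0 ∉ K := (hcr e0 x0 hx0 y0 hy0 hends0).1
    apply hS
    refine ⟨P ∩ Kᶜ, Q, ?_, ?_, ?_, ?_⟩
    · exact Finset.disjoint_of_subset_left Finset.inter_subset_left hdisj
    · apply connected_transfer (G.induce (S \ K)ᶜ)
      · intro a ha b hb hadj
        obtain ⟨e, he⟩ := hadj
        refine ⟨⟨e.1, ?_⟩, he⟩
        intro t ht
        rw [show G.ends e.1 = s(a, b) from he] at ht
        rcases Sym2.mem_iff.mp ht with rfl | rfl
        · exact Finset.mem_compl.mpr (fun htS => (hHmem ⟨e, he⟩).1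
            (Finset.mem_sdiff.mpr ⟨htS, Finset.mem_compl.mp (Finset.mem_inter.mp ha).2⟩))
        · exact Finset.mem_compl.mpr (fun htS => (hHmem ⟨e, he⟩).2
            (Finset.mem_sdiff.mpr ⟨htS, Finset.mem_compl.mp (Finset.mem_inter.mp hb).2⟩))
      · exact ⟨x0, Finset.mem_inter.mpr ⟨hx0, Finset.mem_compl.mpr hx0K⟩⟩
      · intro p hp q hq
        exact (restrict_walk _ Kᶜ P z hgateC (Finset.mem_inter.mp hq).2
          (hPconn p (Finset.mem_inter.mp hp).1 q (Finset.mem_inter.mp hq).1)).1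
          (Finset.mem_inter.mp hp).2
    · apply connected_transfer (G.induce (S \ K)ᶜ)
      · intro a ha b hb hadj
        obtain ⟨e, he⟩ := hadj
        refine ⟨⟨e.1, ?_⟩, he⟩
        intro t ht
        rw [show G.ends e.1 = s(a, b) from he] at ht
        rcases Sym2.mem_iff.mp ht with rfl | rfl
        · exact Finset.mem_compl.mpr (fun htS => (hHmem ⟨e, he⟩).1
            (Finset.mem_sdiff.mpr ⟨htS, (hQnot t ha).1⟩))
        · exact Finset.mem_compl.mpr (fun htS => (hHmem ⟨e, he⟩).2
            (Finset.mem_sdiff.mpr ⟨htS, (hQnot t hb).1⟩))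
      · exact hQne
      · exact hQconn
    · refine le_trans hcard (crossing_card_le (G.induce (S \ K)ᶜ) (G.induce Sᶜ) (fun e => e.1) (fun e => e.1)
        (fun a b h => Subtype.ext h) (fun a b h => Subtype.ext h) P Q (P ∩ Kᶜ) Q ?_)
      intro e₁ x hx y hy hends
      obtain ⟨hxK, hxS, hyS⟩ := hcr e₁ x hx y hy hends
      refine ⟨⟨e₁.1, ?_⟩, rfl, hends,
        Finset.mem_inter.mpr ⟨hx, Finset.mem_compl.mpr hxK⟩, hy⟩
      intro t ht
      rw [show G.ends e₁.1 = s(x, y) from hends] at ht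
      rcases Sym2.mem_iff.mp ht with rfl | rfl
      · exact Finset.mem_compl.mpr hxS
      · exact Finset.mem_compl.mpr hyS
  -- case where one branch set is inside K: embed into outK
  have hOut : ∀ P Q : Finset V, (G.induce (S \ K)ᶜ).ThetaModel c P Q → Q ⊆ K →
      (P ∩ (insert z K : Finset V)).Nonempty → False := by
    intro P Q hmod hQK hPA
    obtain ⟨hdisj, ⟨hPne, hPconn⟩, ⟨hQne, hQconn⟩, hcard⟩ := hmod
    have hins : ∀ t ∈ (insert z K : Finset V), t ∈ insert u (insert v K) := by
      intro t ht
      rcases Finset.mem_insert.mp ht with rfl | h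
      · exact hzin
      · exact Finset.mem_insert_of_mem (Finset.mem_insert_of_mem h)
    apply hout
    refine ⟨P ∩ insert z K, Q, ?_, ?_, ?_, ?_⟩
    · exact Finset.disjoint_of_subset_left Finset.inter_subset_left hdisj
    · apply connected_transfer (G.induce (S \ K)ᶜ)
      · intro a ha b hb hadj
        obtain ⟨e, he⟩ := hadj
        refine ⟨⟨e.1, ?_, ?_⟩, he⟩
        · intro t ht
          rw [show G.ends e.1 = s(a, b) from he] at ht
          rcases Sym2.mem_iff.mp ht with rfl | rfl
          · exact hins _ (Finset.mem_inter.mp ha).2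
          · exact hins _ (Finset.mem_inter.mp hb).2
        · rw [show G.ends e.1 = s(a, b) from he, hsym]
          intro hcon
          have hwmem : w ∈ s(a, b) := by rw [hcon]; exact Sym2.mem_mk_left w z
          rcases Sym2.mem_iff.mp hwmem with rfl | rfl
          · exact (hHmem ⟨e, he⟩).1 hwS
          · exact (hHmem ⟨e, he⟩).2 hwS
      · exact hPA
      · intro p hp q hq
        exact (restrict_walk _ (insert z K) P z hgateA (Finset.mem_inter.mp hq).2
          (hPconn p (Finset.mem_inter.mp hp).1 q (Finset.mem_inter.mp hq).1)).1
          (Finset.mem_inter.mp hp).2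
    · apply connected_transfer (G.induce (S \ K)ᶜ)
      · intro a ha b hb hadj
        obtain ⟨e, he⟩ := hadj
        refine ⟨⟨e.1, ?_, ?_⟩, he⟩
        · intro t ht
          rw [show G.ends e.1 = s(a, b) from he] at ht
          rcases Sym2.mem_iff.mp ht with rfl | rfl
          · exact Finset.mem_insert_of_mem (Finset.mem_insert_of_mem (hQK ha))
          · exact Finset.mem_insert_of_mem (Finset.mem_insert_of_mem (hQK hb))
        · rw [show G.ends e.1 = s(a, b) from he, hsym]
          intro hcon
          have hwmem : w ∈ s(a, b) := by rw [hcon]; exact Sym2.mem_mk_left w z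
          rcases Sym2.mem_iff.mp hwmem with rfl | rfl
          · exact hwK (hQK ha)
          · exact hwK (hQK hb)
      · exact hQne
      · exact hQconn
    · refine le_trans hcard (crossing_card_le (G.induce (S \ K)ᶜ) (G.outK K u v) (fun e => e.1) (fun e => e.1)
        (fun a b h => Subtype.ext h) (fun a b h => Subtype.ext h) P Q (P ∩ insert z K) Q ?_)
      intro e₁ x hx y hy hends
      have hyK := hQK hy
      have hGyx : G.AdjV y x :=
        ⟨e₁.1, (show G.ends e₁.1 = s(x, y) from hends).trans Sym2.eq_swap⟩
      have hxA : x ∈ (insert z K : Finset V) := by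
        rcases hnb y hyK x hGyx with h | h | h
        · exact Finset.mem_insert_of_mem h
        · exact absurd hwS (h ▸ (hHmem ⟨e₁, hends⟩).1)
        · rw [h]; exact Finset.mem_insert_self z K
      refine ⟨⟨e₁.1, ?_, ?_⟩, rfl, hends, Finset.mem_inter.mpr ⟨hx, hxA⟩, hy⟩
      · intro t ht
        rw [show G.ends e₁.1 = s(x, y) from hends] at ht
        rcases Sym2.mem_iff.mp ht with rfl | rfl
        · exact hins _ hxA
        · exact Finset.mem_insert_of_mem (Finset.mem_insert_of_mem hyK)
      · rw [show G.ends e₁.1 = s(x, y) from hends, hsym]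
        intro hcon
        have hwmem : w ∈ s(x, y) := by rw [hcon]; exact Sym2.mem_mk_left w z
        rcases Sym2.mem_iff.mp hwmem with rfl | rfl
        · exact (hHmem ⟨e₁, hends⟩).1 hwS
        · exact hwK hyK
  -- decision tree
  by_cases hYA : Y ∩ (insert z K : Finset V) = ∅
  · exact hScase X Y hm hYA
  · by_cases hXA : X ∩ (insert z K : Finset V) = ∅
    · exact hScase Y X (theta_swap _ hm) hXA
    · replace hYA := Finset.nonempty_iff_ne_empty.mpr hYA
      replace hXA := Finset.nonempty_iff_ne_empty.mpr hXA
      by_cases hzY : z ∈ Y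
      · have hzX : z ∉ X := fun h => (Finset.disjoint_left.mp hm.1 h) hzY
        by_cases hXsub : ∀ t ∈ X, t ∈ (insert z K : Finset V)
        · have hXK : X ⊆ K := by
            intro t ht
            rcases Finset.mem_insert.mp (hXsub t ht) with rfl | h
            · exact absurd ht hzX
            · exact h
          exact hOut Y X (theta_swap _ hm) hXK hYA
        · push_neg at hXsub
          obtain ⟨b, hbX, hbA⟩ := hXsub
          obtain ⟨a, haXA⟩ := hXA
          exact hzX (gate_mem _ _ X z hgateA hbA
            (hm.2.1.2 a (Finset.mem_inter.mp haXA).1 b hbX)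
            (Finset.mem_inter.mp haXA).2)
      · by_cases hYsub : ∀ t ∈ Y, t ∈ (insert z K : Finset V)
        · have hYK : Y ⊆ K := by
            intro t ht
            rcases Finset.mem_insert.mp (hYsub t ht) with rfl | h
            · exact absurd ht hzY
            · exact h
          exact hOut X Y hm hYK hXA
        · push_neg at hYsub
          obtain ⟨b, hbY, hbA⟩ := hYsub
          obtain ⟨a, haYA⟩ := hYA
          exact hzY (gate_mem _ _ Y z hgateA hbA
            (hm.2.2.1.2 a (Finset.mem_inter.mp haYA).1 b hbY)
            (Finset.mem_inter.mp haYA).2)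

end Helpers

/-- a minimal c-bond cover containing u or v is disjoint from the
c-outgrowth K. -/
theorem minimal_cover_disjoint_outgrowth {V : Type} [Fintype V] [DecidableEq V]
    (G : Multigraph V) (c : ℕ) (K : Finset V) (u v : V)
    (hog : G.IsOutgrowth c K u v)
    (S : Finset V) (hS : G.CBondCover c S)
    (hmin : ∀ S' ⊂ S, ¬ G.CBondCover c S')
    (huv : u ∈ S ∨ v ∈ S) :
    S ∩ K = ∅ := by
  obtain ⟨huvne, huK, hvK, hKne, hKconn, hnbr, hadju, hadjv, houtθ⟩ := hog
  by_contra hne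
  have hSK : (S ∩ K).Nonempty := Finset.nonempty_iff_ne_empty.mpr hne
  obtain ⟨a, ha⟩ := hSK
  have haS := (Finset.mem_inter.mp ha).1
  have haK := (Finset.mem_inter.mp ha).2
  have hss : S \ K ⊂ S := by
    rw [Finset.ssubset_iff_of_subset (Finset.sdiff_subset)]
    exact ⟨a, haS, fun h => (Finset.mem_sdiff.mp h).2 haK⟩
  have hnt := hmin (S \ K) hss
  simp only [Multigraph.CBondCover, not_not] at hnt
  obtain ⟨X, Y, hm⟩ := hnt
  have hc1 : 1 ≤ c := by
    rcases Nat.eq_zero_or_pos c with rfl | h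
    · exfalso
      obtain ⟨x₀, hx₀⟩ := hKne
      apply houtθ
      refine ⟨{x₀}, {u}, ?_, ?_, ?_, Nat.zero_le _⟩
      · simp only [Finset.disjoint_singleton]
        exact fun h => huK (h ▸ hx₀)
      · refine ⟨Finset.singleton_nonempty _, ?_⟩
        intro p hp q hq
        rw [Finset.mem_singleton] at hp hq
        subst hp; subst hq
        exact Relation.ReflTransGen.refl
      · refine ⟨Finset.singleton_nonempty _, ?_⟩
        intro p hp q hq
        rw [Finset.mem_singleton] at hp hq
        subst hp; subst hq
        exact Relation.ReflTransGen.refl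
    · exact h
  rcases huv with hu | hv
  · exact (main_aux G c K u v u v S hc1 rfl huK hvK
      (Finset.mem_insert_of_mem (Finset.mem_insert_self v K)) hnbr
      (Finset.mem_sdiff.mpr ⟨hu, huK⟩) hS houtθ X Y hm).elim
  · exact (main_aux G c K u v v u S hc1 Sym2.eq_swap hvK huK
      (Finset.mem_insert_self u _)
      (fun x hx y hadj => by
        rcases hnbr x hx y hadj with h | h | h
        exacts [Or.inl h, Or.inr (Or.inr h), Or.inr (Or.inl h)])
      (Finset.mem_sdiff.mpr ⟨hv, hvK⟩) hS houtθ X Y hm).elim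
end
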